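/- Let {X_k} be a stationary m-dependent sequence in a sub-linear expectation space with E[X_1] = e[X_1] = 0, E[X_1²] < ∞, and E[(X_1² - c)⁺] → 0 as c → ∞. Then there exist constants 0 ≤ σ̲² ≤ σ̄² < ∞ such that E[S_n²]/n → σ̄² and e[S_n²]/n → σ̲², where S_n = X_1 + ... + X_n. -/

import Mathlib

/-!
Write `a_n = E[S_n²]` and `b_n = e[S_n²]`. Cut `S_n` into `k = ⌊n / (p + m)⌋` blocks of length `p`
separated by gaps of length `m`, plus a tail shorter than `p + m`. By `m`-dependence each block is
independent of everything before the gap preceding it, and as the blocks have no mean uncertainty,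
independence makes second moments add: the big blocks contribute exactly `k a_p` (resp. `k b_p`),
the gaps `k a_m`. Since `Y ↦ √E[Y²]` is subadditive, `|√a_n - √(k a_p)| ≤ √(k a_m) + O_p(1)`, and
likewise for `b`. After division by `√n`, `√(a_n / n)` ends up within `√(a_m / (p + m))` of
`√(a_p / (p + m))`; letting `p → ∞` shows that `√(a_n / n)` is a Cauchy sequence.
-/

open Filter Finset

/-- A sub-linear expectation on the space of all real random variables on `Ω`. -/
structure SLE (Ω : Type*) where
  E : (Ω → ℝ) → ℝ
  mono : ∀ X Y : Ω → ℝ, (∀ ω, X ω ≤ Y ω) → E X ≤ E Y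
  const : ∀ c : ℝ, E (fun _ => c) = c
  subadd : ∀ X Y : Ω → ℝ, E (X + Y) ≤ E X + E Y
  homog : ∀ (l : ℝ) (X : Ω → ℝ), 0 ≤ l → E (l • X) = l * E X

/-- The conjugate (lower) expectation. -/
def SLE.e {Ω : Type*} (ℰ : SLE Ω) (X : Ω → ℝ) : ℝ := - ℰ.E (-X)

/-- The class `C_{l,Lip}` of test functions on `ℝ^a × ℝ^b`. -/
def ClLipV {a b : ℕ} (φ : (Fin a → ℝ) → (Fin b → ℝ) → ℝ) : Prop :=
  ∃ (C : ℝ) (m : ℕ), 0 < C ∧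
    ∀ (x₁ : Fin a → ℝ) (y₁ : Fin b → ℝ) (x₂ : Fin a → ℝ) (y₂ : Fin b → ℝ),
      |φ x₁ y₁ - φ x₂ y₂| ≤
        C * (1 + (‖x₁‖ + ‖y₁‖) ^ m + (‖x₂‖ + ‖y₂‖) ^ m) * (‖x₁ - x₂‖ + ‖y₁ - y₂‖)

/-- The class `C_{l,Lip}(ℝ^a)` of one-vector test functions. -/
def ClLipN {a : ℕ} (φ : (Fin a → ℝ) → ℝ) : Prop :=
  ∃ (C : ℝ) (m : ℕ), 0 < C ∧
    ∀ x y : Fin a → ℝ, |φ x - φ y| ≤ C * (1 + ‖x‖ ^ m + ‖y‖ ^ m) * ‖x - y‖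

/-- The random vector `Y` is independent of the random vector `X` under `ℰ`. -/
def IndepVec {Ω : Type*} (ℰ : SLE Ω) {a b : ℕ}
    (Y : Fin b → Ω → ℝ) (X : Fin a → Ω → ℝ) : Prop :=
  ∀ φ : (Fin a → ℝ) → (Fin b → ℝ) → ℝ, ClLipV φ →
    ℰ.E (fun ω => φ (fun i => X i ω) (fun j => Y j ω)) =
      ℰ.E (fun ω => ℰ.E (fun ω' => φ (fun i => X i ω) (fun j => Y j ω')))

/-- The finite sequence `X_1, …, X_K` is `m`-dependent: for every `n` and `j ≥ m+1`,
`(X_{n+m+1},…,X_{n+j})` is independent of `(X_1,…,X_n)`. -/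
def MDepFin {Ω : Type*} (ℰ : SLE Ω) (m : ℕ) (X : ℕ → Ω → ℝ) (K : ℕ) : Prop :=
  ∀ n j : ℕ, m + 1 ≤ j → n + j ≤ K →
    IndepVec ℰ (fun i : Fin (j - m) => X (n + m + 1 + i)) (fun i : Fin n => X (i + 1))

/-- The infinite sequence `X_1, X_2, …` is `m`-dependent. -/
def MDepSeq {Ω : Type*} (ℰ : SLE Ω) (m : ℕ) (X : ℕ → Ω → ℝ) : Prop :=
  ∀ n j : ℕ, m + 1 ≤ j →
    IndepVec ℰ (fun i : Fin (j - m) => X (n + m + 1 + i)) (fun i : Fin n => X (i + 1))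

/-- The sequence `X_1, X_2, …` is stationary:
`(X_1,…,X_n) ≐ (X_{1+p},…,X_{n+p})` for all `n, p`. -/
def StationarySeq {Ω : Type*} (ℰ : SLE Ω) (X : ℕ → Ω → ℝ) : Prop :=
  ∀ n p : ℕ, ∀ φ : (Fin n → ℝ) → ℝ, ClLipN φ →
    ℰ.E (fun ω => φ (fun i => X (i + 1) ω)) =
      ℰ.E (fun ω => φ (fun i => X (i + 1 + p) ω))

open Topology

lemma add_sq_le_one_add_mul_sq (u v : ℝ) {t : ℝ} (ht : 0 < t) :
    (u + v) ^ 2 ≤ (1 + t) * u ^ 2 + (1 + t⁻¹) * v ^ 2 := by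
  have key : (1 + t) * u ^ 2 + (1 + t⁻¹) * v ^ 2 - (u + v) ^ 2 = (t * u - v) ^ 2 / t := by
    field_simp; ring
  have : 0 ≤ (t * u - v) ^ 2 / t := by positivity
  linarith

/-- `t = √b / √a` is the optimal weight; shifting both roots by `ε / 2` avoids dividing by zero. -/
lemma sqrt_le_sqrt_add_sqrt_of_forall_pos {x a b : ℝ} (ha : 0 ≤ a) (hb : 0 ≤ b)
    (h : ∀ t > 0, x ≤ (1 + t) * a + (1 + t⁻¹) * b) : √x ≤ √a + √b := by
  refine le_of_forall_pos_le_add fun ε hε => Real.sqrt_le_iff.2 ⟨by positivity, ?_⟩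
  set α := √a + ε / 2
  set β := √b + ε / 2
  have hα : 0 < α := by positivity
  have hβ : 0 < β := by positivity
  have ha' : a ≤ α ^ 2 := by
    simp only [α]; nlinarith [Real.sq_sqrt ha, Real.sqrt_nonneg a]
  have hb' : b ≤ β ^ 2 := by
    simp only [β]; nlinarith [Real.sq_sqrt hb, Real.sqrt_nonneg b]
  calc x ≤ (1 + β / α) * a + (1 + (β / α)⁻¹) * b := h _ (by positivity)
    _ ≤ (1 + β / α) * α ^ 2 + (1 + (β / α)⁻¹) * β ^ 2 := by gcongr
    _ = (√a + √b + ε) ^ 2 := by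
      simp only [α, β] at hα hβ ⊢
      field_simp
      ring

lemma cauchySeq_of_forall_eventually_dist_lt {α : Type*} [PseudoMetricSpace α] {u : ℕ → α}
    (h : ∀ ε > 0, ∃ c, ∀ᶠ n in atTop, dist (u n) c < ε) : CauchySeq u := by
  refine Metric.cauchySeq_iff'.2 fun ε hε => ?_
  obtain ⟨c, hc⟩ := h (ε / 2) (by positivity)
  obtain ⟨N, hN⟩ := eventually_atTop.1 hc
  exact ⟨N, fun n hn => (dist_triangle_right _ _ c).trans_lt
    (by linarith [hN n hn, hN N le_rfl])⟩

lemma tendsto_natCast_div_div_atTop {q : ℕ} (hq : 0 < q) :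
    Tendsto (fun n : ℕ => ((n / q : ℕ) : ℝ) / n) atTop (𝓝 (1 / q)) := by
  have hq' : (0 : ℝ) < q := by exact_mod_cast hq
  have h := (tendsto_nat_floor_div_atTop.comp
    ((tendsto_natCast_atTop_atTop (R := ℝ)).atTop_div_const hq')).mul_const (1 / (q : ℝ))
  rw [one_mul] at h
  refine h.congr' (eventually_gt_atTop 0 |>.mono fun n hn => ?_)
  have hn' : (0 : ℝ) < n := by exact_mod_cast hn
  simp only [Function.comp_apply, Nat.floor_div_eq_div]
  field_simp

lemma abs_sqrt_div_sub_sqrt_div_le {x y z M n : ℝ} (hn : 0 < n) (h : |√x - √y| ≤ √z + M) :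
    |√(x / n) - √(y / n)| ≤ √(z / n) + M / √n := by
  rw [Real.sqrt_div' _ hn.le, Real.sqrt_div' _ hn.le, Real.sqrt_div' _ hn.le, ← sub_div, abs_div,
    abs_of_pos (Real.sqrt_pos.2 hn), ← add_div]
  exact div_le_div_of_nonneg_right h (Real.sqrt_nonneg _)

lemma exists_tendsto_div_of_abs_sqrt_sub_le {f : ℕ → ℝ} (hf : ∀ n, 0 ≤ f n) (D : ℝ) (m : ℕ)
    (h : ∀ᶠ p in atTop, ∃ M, ∀ n, |√(f n) - √((n / (p + m) : ℕ) * f p)| ≤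
      √((n / (p + m) : ℕ) * D) + M) :
    ∃ L, Tendsto (fun n => f n / n) atTop (𝓝 L) := by
  have hsmall : Tendsto (fun p : ℕ => √(D / ((p + m : ℕ) : ℝ))) atTop (𝓝 0) := by
    have := (tendsto_const_nhds (x := D)).div_atTop
      (tendsto_natCast_atTop_atTop.comp (tendsto_add_atTop_nat m))
    simpa using this.sqrt
  have hcauchy : CauchySeq fun n => √(f n / n) := by
    refine cauchySeq_of_forall_eventually_dist_lt fun ε hε => ?_
    obtain ⟨p, ⟨M, hM⟩, hp, hpε⟩ :=
      (h.and ((eventually_gt_atTop 0).and (hsmall.eventually (gt_mem_nhds hε)))).exists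
    set q := p + m
    have hκ := tendsto_natCast_div_div_atTop (show 0 < q by omega)
    have hlim : Tendsto (fun n : ℕ => |√((n / q : ℕ) * f p / n) - √(f p / q)| +
        (√((n / q : ℕ) * D / n) + M / √n)) atTop (𝓝 (√(D / q))) := by
      have hc (a : ℝ) : Tendsto (fun n : ℕ => √((n / q : ℕ) * a / n)) atTop (𝓝 √(a / q)) := by
        convert (hκ.mul_const a).sqrt using 2 with n
        · rw [mul_div_right_comm]
        · rw [one_div_mul_eq_div]
      have hM : Tendsto (fun n : ℕ => M / √n) atTop (𝓝 0) :=
        tendsto_const_nhds.div_atTop (Real.tendsto_sqrt_atTop.comp tendsto_natCast_atTop_atTop)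
      convert ((hc (f p)).sub_const √(f p / q)).abs.add ((hc D).add hM) using 2
      simp
    refine ⟨√(f p / q), ?_⟩
    filter_upwards [hlim.eventually (gt_mem_nhds hpε), eventually_gt_atTop 0] with n hn hn0
    have hn' : (0 : ℝ) < n := by exact_mod_cast hn0
    calc dist √(f n / n) √(f p / q)
        ≤ |√(f n / n) - √((n / q : ℕ) * f p / n)| + |√((n / q : ℕ) * f p / n) - √(f p / q)| :=
          abs_sub_le _ _ _
      _ ≤ (√((n / q : ℕ) * D / n) + M / √n) + |√((n / q : ℕ) * f p / n) - √(f p / q)| := by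
          gcongr; exact abs_sqrt_div_sub_sqrt_div_le hn' (hM n)
      _ < ε := by linarith
  obtain ⟨L, hL⟩ := cauchySeq_tendsto_of_complete hcauchy
  refine ⟨L ^ 2, (hL.pow 2).congr fun n => ?_⟩
  exact Real.sq_sqrt (div_nonneg (hf n) n.cast_nonneg)

lemma abs_mul_sq_sub_mul_sq_le {E : Type*} [SeminormedAddCommGroup E] [NormedSpace ℝ E]
    (c : ℝ) (Λ : E →L[ℝ] ℝ) (z₁ z₂ : E) :
    |c * Λ z₁ ^ 2 - c * Λ z₂ ^ 2| ≤ |c| * ‖Λ‖ ^ 2 * (‖z₁‖ + ‖z₂‖) * ‖z₁ - z₂‖ := by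
  have hsum : |Λ z₁ + Λ z₂| ≤ ‖Λ‖ * (‖z₁‖ + ‖z₂‖) := by
    rw [mul_add]
    exact (abs_add_le _ _).trans (add_le_add (Λ.le_opNorm z₁) (Λ.le_opNorm z₂))
  have hdiff : |Λ z₁ - Λ z₂| ≤ ‖Λ‖ * ‖z₁ - z₂‖ := by
    rw [← map_sub]; exact Λ.le_opNorm _
  calc |c * Λ z₁ ^ 2 - c * Λ z₂ ^ 2| = |c| * (|Λ z₁ + Λ z₂| * |Λ z₁ - Λ z₂|) := by
        rw [← abs_mul, ← abs_mul]; ring_nf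
    _ ≤ |c| * ((‖Λ‖ * (‖z₁‖ + ‖z₂‖)) * (‖Λ‖ * ‖z₁ - z₂‖)) := by gcongr
    _ = _ := by ring

lemma clLipN_continuousLinearMap {a : ℕ} (L : (Fin a → ℝ) →L[ℝ] ℝ) : ClLipN fun x => L x := by
  refine ⟨‖L‖ + 1, 0, by positivity, fun x y => ?_⟩
  rw [← map_sub]
  calc |L (x - y)| ≤ ‖L‖ * ‖x - y‖ := L.le_opNorm _
    _ ≤ (‖L‖ + 1) * (1 + ‖x‖ ^ 0 + ‖y‖ ^ 0) * ‖x - y‖ := by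
      gcongr; nlinarith [norm_nonneg L]

lemma clLipN_mul_sq {a : ℕ} (c : ℝ) (L : (Fin a → ℝ) →L[ℝ] ℝ) :
    ClLipN fun x => c * L x ^ 2 := by
  refine ⟨|c| * ‖L‖ ^ 2 + 1, 1, by positivity, fun x y => ?_⟩
  refine (abs_mul_sq_sub_mul_sq_le c L x y).trans ?_
  rw [pow_one, pow_one, add_assoc]
  gcongr ?_ * _
  nlinarith [norm_nonneg x, norm_nonneg y, abs_nonneg c, sq_nonneg ‖L‖]

lemma clLipV_mul_sq_add {a b : ℕ} (c : ℝ) (L : (Fin a → ℝ) →L[ℝ] ℝ)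
    (L' : (Fin b → ℝ) →L[ℝ] ℝ) : ClLipV fun x y => c * (L x + L' y) ^ 2 := by
  have hnorm (x : Fin a → ℝ) (y : Fin b → ℝ) : ‖(x, y)‖ ≤ ‖x‖ + ‖y‖ := by
    rw [Prod.norm_def]
    exact max_le (le_add_of_nonneg_right (norm_nonneg _)) (le_add_of_nonneg_left (norm_nonneg _))
  refine ⟨|c| * ‖L.coprod L'‖ ^ 2 + 1, 1, by positivity, fun x₁ y₁ x₂ y₂ => ?_⟩
  have h := abs_mul_sq_sub_mul_sq_le c (L.coprod L') (x₁, y₁) (x₂, y₂)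
  simp only [ContinuousLinearMap.coprod_apply, Prod.mk_sub_mk] at h
  refine h.trans ?_
  rw [pow_one, pow_one, add_assoc]
  gcongr ?_ * ?_
  · have := add_le_add (hnorm x₁ y₁) (hnorm x₂ y₂)
    have hA : 0 ≤ |c| * ‖L.coprod L'‖ ^ 2 := by positivity
    nlinarith [mul_le_mul_of_nonneg_left this hA, norm_nonneg x₁, norm_nonneg x₂, norm_nonneg y₁,
      norm_nonneg y₂]
  · exact hnorm _ _

section Blocks

variable {Ω : Type*}

/-- `blockSum X a r = X (a + 1) + ⋯ + X (a + r)`. -/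
def blockSum (X : ℕ → Ω → ℝ) (a r : ℕ) : Ω → ℝ := ∑ k ∈ Finset.Ioc a (a + r), X k

lemma blockSum_apply (X : ℕ → Ω → ℝ) (a r : ℕ) (ω : Ω) :
    blockSum X a r ω = ∑ i ∈ Finset.range r, X (a + 1 + i) ω := by
  rw [blockSum, Finset.sum_apply, ← Finset.Icc_add_one_left_eq_Ioc,
    ← Finset.Ico_add_one_right_eq_Icc, Finset.sum_Ico_eq_sum_range,
    show a + r + 1 - (a + 1) = r by omega]

lemma sum_fin_eq_blockSum (X : ℕ → Ω → ℝ) (a r : ℕ) (ω : Ω) :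
    ∑ i : Fin r, X (i + 1 + a) ω = blockSum X a r ω := by
  rw [blockSum_apply, ← Fin.sum_univ_eq_sum_range (fun i => X (a + 1 + i) ω)]
  exact Finset.sum_congr rfl fun i _ => by rw [show (i : ℕ) + 1 + a = a + 1 + i by omega]

lemma sum_fin_eq_blockSum_zero (X : ℕ → Ω → ℝ) (r : ℕ) (ω : Ω) :
    ∑ i : Fin r, X (i + 1) ω = blockSum X 0 r ω :=
  sum_fin_eq_blockSum X 0 r ω

lemma blockSum_zero_right (X : ℕ → Ω → ℝ) (a : ℕ) : blockSum X a 0 = 0 := by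
  simp [blockSum]

lemma blockSum_add_blockSum (X : ℕ → Ω → ℝ) (a r r' : ℕ) :
    blockSum X a r + blockSum X (a + r) r' = blockSum X a (r + r') := by
  rw [blockSum, blockSum, blockSum, ← add_assoc]
  exact Finset.sum_Ioc_consecutive _ (by omega) (by omega)

lemma blockSum_mem_span {X : ℕ → Ω → ℝ} {a r n : ℕ} (h : a + r ≤ n) :
    blockSum X a r ∈ Submodule.span ℝ (Set.range fun i : Fin n => X (i + 1)) :=
  Submodule.sum_mem _ fun k hk => by
    rw [Finset.mem_Ioc] at hk
    exact Submodule.subset_span ⟨⟨k - 1, by omega⟩, by dsimp only; congr; omega⟩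

def spacedBlocks (X : ℕ → Ω → ℝ) (s q ℓ k : ℕ) : Ω → ℝ :=
  ∑ i ∈ Finset.range k, blockSum X (s + i * q) ℓ

lemma spacedBlocks_add_spacedBlocks (X : ℕ → Ω → ℝ) (p m k : ℕ) :
    spacedBlocks X 0 (p + m) p k + spacedBlocks X p (p + m) m k = blockSum X 0 (k * (p + m)) := by
  induction k with
  | zero => simp [spacedBlocks, blockSum_zero_right]
  | succ k ih =>
    have hgap := blockSum_add_blockSum X (k * (p + m)) p m
    have hstep := blockSum_add_blockSum X 0 (k * (p + m)) (p + m)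
    simp only [zero_add] at hstep
    rw [spacedBlocks, spacedBlocks, Finset.sum_range_succ, Finset.sum_range_succ]
    rw [spacedBlocks, spacedBlocks] at ih
    rw [add_add_add_comm, ih, zero_add, show p + k * (p + m) = k * (p + m) + p by ring, hgap,
      hstep, add_one_mul]

lemma blockSum_eq_spacedBlocks_add (X : ℕ → Ω → ℝ) (p m n : ℕ) :
    blockSum X 0 n = spacedBlocks X 0 (p + m) p (n / (p + m)) +
      (spacedBlocks X p (p + m) m (n / (p + m)) +
        blockSum X (n / (p + m) * (p + m)) (n % (p + m))) := by
  have h := blockSum_add_blockSum X 0 (n / (p + m) * (p + m)) (n % (p + m))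
  rw [zero_add, Nat.div_add_mod'] at h
  rw [← add_assoc, spacedBlocks_add_spacedBlocks, h]

lemma spacedBlocks_mem_span {X : ℕ → Ω → ℝ} {s q ℓ k m n : ℕ} (hq : ℓ + m ≤ q)
    (hn : s + k * q = n + m) :
    spacedBlocks X s q ℓ k ∈ Submodule.span ℝ (Set.range fun i : Fin n => X (i + 1)) :=
  Submodule.sum_mem _ fun i hi => blockSum_mem_span <| by
    have := Nat.mul_le_mul_right q (Finset.mem_range.1 hi)
    rw [Nat.succ_mul] at this
    omega

lemma blockSum_zero_apply (X : ℕ → Ω → ℝ) (n : ℕ) (ω : Ω) :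
    blockSum X 0 n ω = ∑ k ∈ Finset.Icc 1 n, X k ω := by
  rw [blockSum, Finset.sum_apply, zero_add, ← Finset.Icc_add_one_left_eq_Ioc, zero_add]

end Blocks

namespace SLE

variable {Ω : Type*} (ℰ : SLE Ω)

lemma E_zero : ℰ.E 0 = 0 := ℰ.const 0

lemma E_nonneg {Y : Ω → ℝ} (hY : ∀ ω, 0 ≤ Y ω) : 0 ≤ ℰ.E Y :=
  ℰ.E_zero ▸ ℰ.mono 0 Y hY

lemma e_nonneg {Y : Ω → ℝ} (hY : ∀ ω, 0 ≤ Y ω) : 0 ≤ ℰ.e Y := by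
  have := ℰ.mono (-Y) 0 fun ω => neg_nonpos.2 (hY ω)
  rw [E_zero] at this
  exact neg_nonneg.2 this

lemma e_le_E (Y : Ω → ℝ) : ℰ.e Y ≤ ℰ.E Y := by
  have := ℰ.subadd Y (-Y)
  rw [add_neg_cancel, E_zero] at this
  rw [e]
  linarith

lemma E_add_const (Y : Ω → ℝ) (c : ℝ) : ℰ.E (fun ω => Y ω + c) = ℰ.E Y + c := by
  have h₁ := ℰ.subadd Y fun _ => c
  have h₂ := ℰ.subadd (fun ω => Y ω + c) fun _ => -c
  rw [ℰ.const] at h₁ h₂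
  have : (fun ω => Y ω + c) + (fun _ => -c) = Y := by ext; simp
  rw [this] at h₂
  exact le_antisymm h₁ (by linarith)

lemma e_add_le (P Q : Ω → ℝ) : ℰ.e (P + Q) ≤ ℰ.e P + ℰ.E Q := by
  have := ℰ.subadd (-(P + Q)) Q
  rw [show -(P + Q) + Q = -P by abel] at this
  simp only [e]
  linarith

lemma e_mono {P Q : Ω → ℝ} (h : ∀ ω, P ω ≤ Q ω) : ℰ.e P ≤ ℰ.e Q :=
  neg_le_neg (ℰ.mono _ _ fun ω => neg_le_neg (h ω))

lemma e_smul {c : ℝ} (hc : 0 ≤ c) (Y : Ω → ℝ) : ℰ.e (c • Y) = c * ℰ.e Y := by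
  simp only [e, ← smul_neg, ℰ.homog c _ hc, mul_neg]

lemma e_eq_neg_E_neg_one_mul (Y : Ω → ℝ) : ℰ.e Y = -ℰ.E (fun ω => -1 * Y ω) := by
  rw [e]; congr; ext; simp

lemma sqrt_E_sq_add_le (U V : Ω → ℝ) :
    √(ℰ.E fun ω => (U ω + V ω) ^ 2) ≤ √(ℰ.E fun ω => U ω ^ 2) + √(ℰ.E fun ω => V ω ^ 2) := by
  refine sqrt_le_sqrt_add_sqrt_of_forall_pos (ℰ.E_nonneg fun _ => sq_nonneg _)
    (ℰ.E_nonneg fun _ => sq_nonneg _) fun t ht => ?_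
  calc ℰ.E (fun ω => (U ω + V ω) ^ 2)
      ≤ ℰ.E ((1 + t) • (fun ω => U ω ^ 2) + (1 + t⁻¹) • fun ω => V ω ^ 2) :=
        ℰ.mono _ _ fun ω => add_sq_le_one_add_mul_sq _ _ ht
    _ ≤ _ := (ℰ.subadd _ _).trans_eq <| by
        rw [ℰ.homog _ _ (by positivity), ℰ.homog _ _ (by positivity)]

lemma sqrt_e_sq_add_le (U V : Ω → ℝ) :
    √(ℰ.e fun ω => (U ω + V ω) ^ 2) ≤ √(ℰ.e fun ω => U ω ^ 2) + √(ℰ.E fun ω => V ω ^ 2) := by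
  refine sqrt_le_sqrt_add_sqrt_of_forall_pos (ℰ.e_nonneg fun _ => sq_nonneg _)
    (ℰ.E_nonneg fun _ => sq_nonneg _) fun t ht => ?_
  calc ℰ.e (fun ω => (U ω + V ω) ^ 2)
      ≤ ℰ.e ((1 + t) • (fun ω => U ω ^ 2) + (1 + t⁻¹) • fun ω => V ω ^ 2) :=
        ℰ.e_mono fun ω => add_sq_le_one_add_mul_sq _ _ ht
    _ ≤ _ := (ℰ.e_add_le _ _).trans_eq <| by
        rw [ℰ.e_smul (by positivity), ℰ.homog _ _ (by positivity)]

lemma abs_sqrt_E_sq_add_sub_le (U V : Ω → ℝ) :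
    |√(ℰ.E fun ω => (U ω + V ω) ^ 2) - √(ℰ.E fun ω => U ω ^ 2)| ≤ √(ℰ.E fun ω => V ω ^ 2) := by
  have h := ℰ.sqrt_E_sq_add_le (fun ω => U ω + V ω) (fun ω => -V ω)
  simp only [add_neg_cancel_right, neg_sq] at h
  exact abs_sub_le_iff.2 ⟨by linarith [ℰ.sqrt_E_sq_add_le U V], by linarith⟩

lemma abs_sqrt_e_sq_add_sub_le (U V : Ω → ℝ) :
    |√(ℰ.e fun ω => (U ω + V ω) ^ 2) - √(ℰ.e fun ω => U ω ^ 2)| ≤ √(ℰ.E fun ω => V ω ^ 2) := by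
  have h := ℰ.sqrt_e_sq_add_le (fun ω => U ω + V ω) (fun ω => -V ω)
  simp only [add_neg_cancel_right, neg_sq] at h
  exact abs_sub_le_iff.2 ⟨by linarith [ℰ.sqrt_e_sq_add_le U V], by linarith⟩

def MeanZero (Y : Ω → ℝ) : Prop := ℰ.E Y = 0 ∧ ℰ.e Y = 0

variable {ℰ}

lemma meanZero_zero : ℰ.MeanZero 0 := by
  simp [MeanZero, e, E_zero]

lemma MeanZero.add {Y Z : Ω → ℝ} (hY : ℰ.MeanZero Y) (hZ : ℰ.MeanZero Z) :
    ℰ.MeanZero (Y + Z) := by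
  have hE := ℰ.subadd Y Z
  have he := ℰ.subadd (-Y) (-Z)
  have := ℰ.e_le_E (Y + Z)
  simp only [MeanZero, e, neg_add] at *
  constructor <;> linarith

lemma MeanZero.sum {ι : Type*} {s : Finset ι} {Y : ι → Ω → ℝ}
    (h : ∀ i ∈ s, ℰ.MeanZero (Y i)) : ℰ.MeanZero (∑ i ∈ s, Y i) := by
  classical
  induction s using Finset.induction_on with
  | empty => exact meanZero_zero
  | insert a s ha ih =>
    rw [Finset.sum_insert ha]
    exact (h a (by simp)).add (ih fun i hi => h i (by simp [hi]))

lemma MeanZero.neg {Y : Ω → ℝ} (hY : ℰ.MeanZero Y) : ℰ.MeanZero (-Y) := by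
  simp only [MeanZero, e, neg_neg] at *
  constructor <;> linarith

lemma MeanZero.smul {Y : Ω → ℝ} (hY : ℰ.MeanZero Y) {c : ℝ} (hc : 0 ≤ c) :
    ℰ.MeanZero (c • Y) := by
  simp [MeanZero, ℰ.homog c Y hc, ℰ.e_smul hc, hY.1, hY.2]

lemma MeanZero.const_mul {Y : Ω → ℝ} (hY : ℰ.MeanZero Y) (c : ℝ) :
    ℰ.MeanZero fun ω => c * Y ω := by
  rcases le_total 0 c with hc | hc
  · exact hY.smul hc
  · convert hY.neg.smul (neg_nonneg.2 hc) using 1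
    ext; simp

lemma E_add_meanZero (P : Ω → ℝ) {Q : Ω → ℝ} (hQ : ℰ.MeanZero Q) : ℰ.E (P + Q) = ℰ.E P := by
  have h₁ := ℰ.subadd P Q
  have h₂ := ℰ.subadd (P + Q) (-Q)
  rw [add_neg_cancel_right] at h₂
  have : ℰ.E (-Q) = 0 := by simpa [MeanZero, e] using hQ.2
  linarith [hQ.1]

/-- The cross term `2 c a B` has no mean uncertainty. -/
lemma E_mul_sq_const_add {B : Ω → ℝ} (hB : ℰ.MeanZero B) (c a : ℝ) :
    ℰ.E (fun ω => c * (a + B ω) ^ 2) = c * a ^ 2 + ℰ.E (fun ω => c * B ω ^ 2) := by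
  have h := E_add_meanZero (fun ω => c * B ω ^ 2 + c * a ^ 2) (hB.const_mul (2 * c * a))
  have : (fun ω => c * B ω ^ 2 + c * a ^ 2) + (fun ω => 2 * c * a * B ω) =
      fun ω => c * (a + B ω) ^ 2 := by ext; simp only [Pi.add_apply]; ring
  rw [this] at h
  rw [h, ℰ.E_add_const, add_comm]

variable {X : ℕ → Ω → ℝ} {m p : ℕ}

lemma E_mul_sq_blockSum_eq (hstat : StationarySeq ℰ X) (a r : ℕ) (c : ℝ) :
    ℰ.E (fun ω => c * blockSum X a r ω ^ 2) = ℰ.E (fun ω => c * blockSum X 0 r ω ^ 2) := by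
  have hφ := clLipN_mul_sq c (∑ i : Fin r, ContinuousLinearMap.proj i)
  have h := hstat r a _ hφ
  simp only [_root_.sum_apply, ContinuousLinearMap.proj_apply, sum_fin_eq_blockSum,
    sum_fin_eq_blockSum_zero] at h
  exact h.symm

lemma meanZero_X (hstat : StationarySeq ℰ X) (hX1 : ℰ.MeanZero (X 1))
    {k : ℕ} (hk : 1 ≤ k) : ℰ.MeanZero (X k) := by
  have h₁ := hstat 1 (k - 1) _ (clLipN_continuousLinearMap (ContinuousLinearMap.proj 0))
  have h₂ := hstat 1 (k - 1) _ (clLipN_continuousLinearMap (-ContinuousLinearMap.proj 0))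
  simp only [neg_apply, ContinuousLinearMap.proj_apply, Fin.val_zero, zero_add,
    Nat.add_sub_cancel' hk] at h₁ h₂
  have h₂' : ℰ.E (-X k) = ℰ.E (-X 1) := h₂.symm
  exact ⟨h₁ ▸ hX1.1, by rw [e, h₂', ← hX1.2, e]⟩

lemma meanZero_blockSum (hstat : StationarySeq ℰ X) (hX1 : ℰ.MeanZero (X 1)) (a r : ℕ) :
    ℰ.MeanZero (blockSum X a r) :=
  MeanZero.sum fun k hk => meanZero_X hstat hX1 (by rw [Finset.mem_Ioc] at hk; omega)

lemma E_mul_sq_add_blockSum (hmdep : MDepSeq ℰ m X) {n ℓ : ℕ} {A : Ω → ℝ}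
    (hA : A ∈ Submodule.span ℝ (Set.range fun i : Fin n => X (i + 1)))
    (hB : ℰ.MeanZero (blockSum X (n + m) ℓ)) (c : ℝ) :
    ℰ.E (fun ω => c * (A ω + blockSum X (n + m) ℓ ω) ^ 2) =
      ℰ.E (fun ω => c * A ω ^ 2) + ℰ.E (fun ω => c * blockSum X (n + m) ℓ ω ^ 2) := by
  rcases Nat.eq_zero_or_pos ℓ with rfl | hℓ
  · simp [blockSum_zero_right, ℰ.const]
  obtain ⟨w, rfl⟩ := (Submodule.mem_span_range_iff_exists_fun ℝ).1 hA
  have hfuture (ω : Ω) : ∑ j : Fin (m + ℓ - m), X (n + m + 1 + j) ω = blockSum X (n + m) ℓ ω := by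
    rw [Fin.sum_univ_eq_sum_range (fun j => X (n + m + 1 + j) ω), Nat.add_sub_cancel_left,
      blockSum_apply]
  have h := hmdep n (m + ℓ) (by omega) _ (clLipV_mul_sq_add c
    (∑ i, w i • ContinuousLinearMap.proj i) (∑ j, ContinuousLinearMap.proj j))
  simp only [_root_.sum_apply, smul_apply, ContinuousLinearMap.proj_apply, hfuture,
    E_mul_sq_const_add hB, E_add_const] at h
  simpa only [Finset.sum_apply, Pi.smul_apply] using h

/-- The blocks are at least `m` apart, so each one is independent of those before it. -/
lemma E_mul_sq_spacedBlocks (hstat : StationarySeq ℰ X) (hmdep : MDepSeq ℰ m X)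
    (hX1 : ℰ.MeanZero (X 1)) {s q ℓ : ℕ} (hq : ℓ + m ≤ q) (c : ℝ) (k : ℕ) :
    ℰ.E (fun ω => c * spacedBlocks X s q ℓ k ω ^ 2) =
      k * ℰ.E (fun ω => c * blockSum X 0 ℓ ω ^ 2) := by
  induction k with
  | zero => simp [spacedBlocks, ℰ.const]
  | succ k ih =>
    have hsplit : spacedBlocks X s q ℓ (k + 1) =
        spacedBlocks X s q ℓ k + blockSum X (s + k * q) ℓ :=
      Finset.sum_range_succ _ _
    rcases Nat.eq_zero_or_pos k with rfl | hk
    · simp [spacedBlocks, E_mul_sq_blockSum_eq hstat]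
    obtain ⟨n, hn⟩ : ∃ n, s + k * q = n + m :=
      ⟨s + k * q - m, by have := Nat.le_mul_of_pos_left q hk; omega⟩
    rw [hsplit, hn]
    simp only [Pi.add_apply]
    rw [E_mul_sq_add_blockSum hmdep (spacedBlocks_mem_span hq hn)
      (meanZero_blockSum hstat hX1 _ _), ih, E_mul_sq_blockSum_eq hstat (n + m)]
    push_cast
    ring

lemma E_sq_spacedBlocks (hstat : StationarySeq ℰ X) (hmdep : MDepSeq ℰ m X)
    (hX1 : ℰ.MeanZero (X 1)) {s q ℓ : ℕ} (hq : ℓ + m ≤ q) (k : ℕ) :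
    ℰ.E (fun ω => spacedBlocks X s q ℓ k ω ^ 2) = k * ℰ.E (fun ω => blockSum X 0 ℓ ω ^ 2) := by
  simpa only [one_mul] using E_mul_sq_spacedBlocks hstat hmdep hX1 hq 1 k

lemma e_sq_spacedBlocks (hstat : StationarySeq ℰ X) (hmdep : MDepSeq ℰ m X)
    (hX1 : ℰ.MeanZero (X 1)) {s q ℓ : ℕ} (hq : ℓ + m ≤ q) (k : ℕ) :
    ℰ.e (fun ω => spacedBlocks X s q ℓ k ω ^ 2) = k * ℰ.e (fun ω => blockSum X 0 ℓ ω ^ 2) := by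
  rw [e_eq_neg_E_neg_one_mul, e_eq_neg_E_neg_one_mul,
    E_mul_sq_spacedBlocks hstat hmdep hX1 hq, mul_neg]

lemma sqrt_E_sq_gaps_add_tail_le (hstat : StationarySeq ℰ X) (hmdep : MDepSeq ℰ m X)
    (hX1 : ℰ.MeanZero (X 1)) (hp : 0 < p) (hmp : m ≤ p) (n : ℕ) :
    √(ℰ.E fun ω => (spacedBlocks X p (p + m) m (n / (p + m)) ω +
        blockSum X (n / (p + m) * (p + m)) (n % (p + m)) ω) ^ 2) ≤
      √((n / (p + m) : ℕ) * ℰ.E fun ω => blockSum X 0 m ω ^ 2) +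
        √(∑ r ∈ Finset.range (p + m), ℰ.E fun ω => blockSum X 0 r ω ^ 2) := by
  refine (ℰ.sqrt_E_sq_add_le _ _).trans (add_le_add ?_ ?_)
  · rw [E_sq_spacedBlocks hstat hmdep hX1 (by omega)]
  · have h := E_mul_sq_blockSum_eq hstat (n / (p + m) * (p + m)) (n % (p + m)) 1
    simp only [one_mul] at h
    rw [h]
    exact Real.sqrt_le_sqrt <| Finset.single_le_sum (fun r _ => ℰ.E_nonneg fun _ => sq_nonneg _)
      (Finset.mem_range.2 (Nat.mod_lt _ (by omega)))

lemma abs_sqrt_E_sq_sub_le (hstat : StationarySeq ℰ X) (hmdep : MDepSeq ℰ m X)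
    (hX1 : ℰ.MeanZero (X 1)) (hp : 0 < p) (hmp : m ≤ p) (n : ℕ) :
    |√(ℰ.E fun ω => blockSum X 0 n ω ^ 2) -
        √((n / (p + m) : ℕ) * ℰ.E fun ω => blockSum X 0 p ω ^ 2)| ≤
      √((n / (p + m) : ℕ) * ℰ.E fun ω => blockSum X 0 m ω ^ 2) +
        √(∑ r ∈ Finset.range (p + m), ℰ.E fun ω => blockSum X 0 r ω ^ 2) := by
  rw [← E_sq_spacedBlocks hstat hmdep hX1 le_rfl, blockSum_eq_spacedBlocks_add X p m n]
  exact (ℰ.abs_sqrt_E_sq_add_sub_le _ _).trans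
    (sqrt_E_sq_gaps_add_tail_le hstat hmdep hX1 hp hmp n)

lemma abs_sqrt_e_sq_sub_le (hstat : StationarySeq ℰ X) (hmdep : MDepSeq ℰ m X)
    (hX1 : ℰ.MeanZero (X 1)) (hp : 0 < p) (hmp : m ≤ p) (n : ℕ) :
    |√(ℰ.e fun ω => blockSum X 0 n ω ^ 2) -
        √((n / (p + m) : ℕ) * ℰ.e fun ω => blockSum X 0 p ω ^ 2)| ≤
      √((n / (p + m) : ℕ) * ℰ.E fun ω => blockSum X 0 m ω ^ 2) +
        √(∑ r ∈ Finset.range (p + m), ℰ.E fun ω => blockSum X 0 r ω ^ 2) := by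
  rw [← e_sq_spacedBlocks hstat hmdep hX1 le_rfl, blockSum_eq_spacedBlocks_add X p m n]
  exact (ℰ.abs_sqrt_e_sq_add_sub_le _ _).trans
    (sqrt_E_sq_gaps_add_tail_le hstat hmdep hX1 hp hmp n)

end SLE

theorem stmt_15_general {Ω : Type} (ℰ : SLE Ω) (m : ℕ) (X : ℕ → Ω → ℝ)
    (hstat : StationarySeq ℰ X) (hmdep : MDepSeq ℰ m X)
    (hmean : ℰ.E (X 1) = 0) (hmean' : ℰ.e (X 1) = 0) :
    ∃ lσ2 uσ2 : ℝ, 0 ≤ lσ2 ∧ lσ2 ≤ uσ2 ∧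
      Filter.Tendsto
        (fun n : ℕ => ℰ.E (fun ω => (∑ k ∈ Finset.Icc 1 n, X k ω) ^ 2) / n)
        Filter.atTop (nhds uσ2) ∧
      Filter.Tendsto
        (fun n : ℕ => ℰ.e (fun ω => (∑ k ∈ Finset.Icc 1 n, X k ω) ^ 2) / n)
        Filter.atTop (nhds lσ2) := by
  have hX1 : ℰ.MeanZero (X 1) := ⟨hmean, hmean'⟩
  have hlarge : ∀ᶠ p in atTop, 0 < p ∧ m ≤ p :=
    (eventually_gt_atTop 0).and (eventually_ge_atTop m)
  obtain ⟨uσ2, hu⟩ := exists_tendsto_div_of_abs_sqrt_sub_le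
    (fun n => ℰ.E_nonneg fun _ => sq_nonneg (blockSum X 0 n _)) _ m
    (hlarge.mono fun p hp => ⟨_, SLE.abs_sqrt_E_sq_sub_le hstat hmdep hX1 hp.1 hp.2⟩)
  obtain ⟨lσ2, hl⟩ := exists_tendsto_div_of_abs_sqrt_sub_le
    (fun n => ℰ.e_nonneg fun _ => sq_nonneg (blockSum X 0 n _)) _ m
    (hlarge.mono fun p hp => ⟨_, SLE.abs_sqrt_e_sq_sub_le hstat hmdep hX1 hp.1 hp.2⟩)
  simp only [blockSum_zero_apply] at hu hl
  refine ⟨lσ2, uσ2, ge_of_tendsto' hl fun n => ?_, le_of_tendsto_of_tendsto' hl hu fun n => ?_,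
    hu, hl⟩
  · exact div_nonneg (ℰ.e_nonneg fun _ => sq_nonneg _) n.cast_nonneg
  · exact div_le_div_of_nonneg_right (ℰ.e_le_E _) n.cast_nonneg

/-- for a stationary `m`-dependent sequence with
`E[X_1] = e[X_1] = 0`, finite second moment and `E[(X_1² - c)⁺] → 0` as `c → ∞`,
there exist `0 ≤ σ̲² ≤ σ̄² < ∞` with `E[S_n²]/n → σ̄²` and `e[S_n²]/n → σ̲²`. -/
theorem stmt_15 {Ω : Type} (ℰ : SLE Ω) (m : ℕ) (X : ℕ → Ω → ℝ)
    (hstat : StationarySeq ℰ X) (hmdep : MDepSeq ℰ m X)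
    (hmean : ℰ.E (X 1) = 0) (hmean' : ℰ.e (X 1) = 0)
    (hUI : Filter.Tendsto (fun c : ℝ => ℰ.E (fun ω => max ((X 1 ω) ^ 2 - c) 0))
      Filter.atTop (nhds 0)) :
    ∃ lσ2 uσ2 : ℝ, 0 ≤ lσ2 ∧ lσ2 ≤ uσ2 ∧
      Filter.Tendsto
        (fun n : ℕ => ℰ.E (fun ω => (∑ k ∈ Finset.Icc 1 n, X k ω) ^ 2) / n)
        Filter.atTop (nhds uσ2) ∧
      Filter.Tendsto
        (fun n : ℕ => ℰ.e (fun ω => (∑ k ∈ Finset.Icc 1 n, X k ω) ^ 2) / n)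
        Filter.atTop (nhds lσ2) :=
  stmt_15_general ℰ m X hstat hmdep hmean hmean'
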